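/- The undirected power graph of a finite group G is isomorphic to a Cayley graph of some group if and only if G is a cyclic p-group. -/
import Mathlib


def powerGraph (G : Type*) [Group G] : SimpleGraph G :=
  SimpleGraph.fromRel (fun x y => ∃ m : ℕ, 0 < m ∧ y = x ^ m)

/-- The Cayley graph of a group `H` with connection set `C`:
`g` and `h` are adjacent iff they are distinct and `g⁻¹ * h ∈ C` (up to symmetry). -/
def cayleyGraph (H : Type*) [Group H] (C : Set H) : SimpleGraph H :=
  SimpleGraph.fromRel (fun g h => g⁻¹ * h ∈ C)

open Subgroup

lemma aux_mem_zpowers_of_orderOf_dvd {G : Type*} [Group G] [Fintype G] [IsCyclic G]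
    {x y : G} (h : orderOf x ∣ orderOf y) : x ∈ Subgroup.zpowers y := by
  classical
  have hd0 : 0 < orderOf y := orderOf_pos y
  have h1 := IsCyclic.card_pow_eq_one_le (α := G) hd0
  by_contra hx
  have hcard : (insert x (Subgroup.zpowers y : Set G).toFinset).card = orderOf y + 1 := by
    rw [Finset.card_insert_of_notMem (by simpa using hx), Set.toFinset_card]
    congr 1
    rw [← Nat.card_eq_fintype_card]
    exact Nat.card_zpowers y
  have hle : (insert x (Subgroup.zpowers y : Set G).toFinset).card ≤ orderOf y := by
    refine le_trans (Finset.card_le_card ?_) h1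
    intro a ha
    simp only [Finset.mem_filter, Finset.mem_univ, true_and]
    rcases Finset.mem_insert.mp ha with rfl | ha
    · exact orderOf_dvd_iff_pow_eq_one.mp h
    · rw [Set.mem_toFinset] at ha
      obtain ⟨k, rfl⟩ := ha
      rw [← zpow_natCast (y ^ k) (orderOf y), ← zpow_mul, mul_comm, zpow_mul,
        zpow_natCast, pow_orderOf_eq_one, one_zpow]
  omega

lemma aux_exists_pos_pow {G : Type*} [Group G] [Fintype G] {u v : G}
    (hu : u ∈ Subgroup.zpowers v) : ∃ m : ℕ, 0 < m ∧ u = v ^ m := by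
  obtain ⟨m, hm⟩ := mem_powers_iff_mem_zpowers.mpr hu
  refine ⟨m + orderOf v, Nat.add_pos_right m (orderOf_pos v), ?_⟩
  rw [pow_add, pow_orderOf_eq_one, mul_one]
  exact hm.symm

lemma aux_powerGraph_complete {G : Type*} [Group G] [Fintype G]
    (hc : IsCyclic G) {p n : ℕ} (hp : p.Prime) (hcard : Fintype.card G = p ^ n)
    {x y : G} (hxy : x ≠ y) : (powerGraph G).Adj x y := by
  haveI := hc
  have hx : orderOf x ∣ p ^ n := hcard ▸ orderOf_dvd_card
  have hy : orderOf y ∣ p ^ n := hcard ▸ orderOf_dvd_card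
  obtain ⟨a, -, ha⟩ := (Nat.dvd_prime_pow hp).mp hx
  obtain ⟨b, -, hb⟩ := (Nat.dvd_prime_pow hp).mp hy
  rcases le_total a b with hab | hab
  · have hdvd : orderOf x ∣ orderOf y := by rw [ha, hb]; exact pow_dvd_pow p hab
    obtain ⟨m, hm, hxm⟩ := aux_exists_pos_pow (aux_mem_zpowers_of_orderOf_dvd hdvd)
    exact ⟨hxy, Or.inr ⟨m, hm, hxm⟩⟩
  · have hdvd : orderOf y ∣ orderOf x := by rw [ha, hb]; exact pow_dvd_pow p hab
    obtain ⟨m, hm, hym⟩ := aux_exists_pos_pow (aux_mem_zpowers_of_orderOf_dvd hdvd)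
    exact ⟨hxy, Or.inl ⟨m, hm, hym⟩⟩

/-- The power graph of a finite group `G` is isomorphic to a Cayley graph of some
group iff `G` is a cyclic `p`-group. -/
theorem powerGraph_isCayley_iff_cyclic_primePow (G : Type) [Group G] [Fintype G] :
    (∃ (H : Type) (_ : Group H) (C : Set H),
        (1 : H) ∉ C ∧ (∀ c ∈ C, c⁻¹ ∈ C) ∧
          Nonempty (powerGraph G ≃g cayleyGraph H C)) ↔
      IsCyclic G ∧ ∃ p n : ℕ, p.Prime ∧ Fintype.card G = p ^ n := by
  constructor
  · rintro ⟨H, _, C, hC1, hCinv, ⟨e⟩⟩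
    classical
    -- the Cayley graph has constant "degree"
    have key : ∀ g h : H, Nat.card ((cayleyGraph H C).neighborSet g)
        = Nat.card ((cayleyGraph H C).neighborSet h) := by
      intro g h
      let φ : cayleyGraph H C ≃g cayleyGraph H C :=
        { toEquiv := Equiv.mulLeft (h * g⁻¹)
          map_rel_iff' := by
            intro u v
            simp [cayleyGraph, mul_assoc] }
      have hg : φ g = h := by
        show h * g⁻¹ * g = h
        simp
      have := Nat.card_congr (φ.mapNeighborSet g)
      rwa [hg] at this
    -- all power-graph neighborhoods have the same size
    have deg : ∀ x : G, Set.ncard ((powerGraph G).neighborSet x)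
        = Set.ncard ((powerGraph G).neighborSet 1) := by
      intro x
      rw [← Nat.card_coe_set_eq, ← Nat.card_coe_set_eq]
      calc Nat.card ((powerGraph G).neighborSet x)
          = Nat.card ((cayleyGraph H C).neighborSet (e x)) :=
            Nat.card_congr (e.mapNeighborSet x)
        _ = Nat.card ((cayleyGraph H C).neighborSet (e 1)) := key _ _
        _ = Nat.card ((powerGraph G).neighborSet 1) :=
            (Nat.card_congr (e.mapNeighborSet 1)).symm
    have hN1 : (powerGraph G).neighborSet 1 = {(1 : G)}ᶜ := by
      ext y
      simp only [SimpleGraph.mem_neighborSet, Set.mem_compl_iff, Set.mem_singleton_iff]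
      constructor
      · exact fun h => h.ne.symm
      · intro hy
        exact ⟨fun h => hy h.symm,
          Or.inr ⟨orderOf y, orderOf_pos y, (pow_orderOf_eq_one y).symm⟩⟩
    have hcompl : ∀ x : G, Set.ncard ({x}ᶜ : Set G) = Set.ncard ({(1 : G)}ᶜ : Set G) := by
      intro x
      have himg : (fun z => x * z) '' ({(1 : G)}ᶜ : Set G) = ({x}ᶜ : Set G) := by
        ext z
        simp only [Set.mem_image, Set.mem_compl_iff, Set.mem_singleton_iff]
        constructor
        · rintro ⟨w, hw, rfl⟩
          intro hz
          exact hw (by simpa using hz)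
        · intro hz
          refine ⟨x⁻¹ * z, fun h => hz ?_, by simp⟩
          have := congrArg (x * ·) h
          simpa [mul_assoc, eq_comm] using this
      rw [← himg, Set.ncard_image_of_injective _ (mul_right_injective x)]
    -- the power graph is complete
    have hns : ∀ x : G, (powerGraph G).neighborSet x = ({x}ᶜ : Set G) := by
      intro x
      refine Set.eq_of_subset_of_ncard_le ?_ ?_ (Set.toFinite _)
      · intro y hy
        have hadj : (powerGraph G).Adj x y := hy
        simp only [Set.mem_compl_iff, Set.mem_singleton_iff]
        exact hadj.ne.symm
      · rw [hcompl x, ← hN1, deg x]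
    have hadj : ∀ x y : G, x ≠ y → (powerGraph G).Adj x y := by
      intro x y hxy
      have : y ∈ (powerGraph G).neighborSet x := by
        rw [hns x]
        simp only [Set.mem_compl_iff, Set.mem_singleton_iff]
        exact fun h => hxy h.symm
      exact this
    -- cyclic
    obtain ⟨x₀, -, hx₀⟩ := Finset.exists_max_image (Finset.univ : Finset G)
      (fun g : G => orderOf g) ⟨1, Finset.mem_univ 1⟩
    have hgen : ∀ y : G, y ∈ Subgroup.zpowers x₀ := by
      intro y
      by_cases hyx : y = x₀
      · exact hyx ▸ Subgroup.mem_zpowers x₀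
      obtain ⟨-, h | h⟩ := hadj x₀ y (fun h => hyx h.symm)
      · obtain ⟨m, -, rfl⟩ := h
        exact Subgroup.mem_zpowers_iff.mpr ⟨(m : ℤ), by simp⟩
      · obtain ⟨m, -, hm⟩ := h
        have hdvd : orderOf x₀ ∣ orderOf y := hm ▸ orderOf_pow_dvd m
        have hle : orderOf y ≤ orderOf x₀ := hx₀ y (Finset.mem_univ y)
        have heq : orderOf x₀ = orderOf y :=
          le_antisymm (Nat.le_of_dvd (orderOf_pos y) hdvd) hle
        have hsub : (Subgroup.zpowers x₀ : Set G) ⊆ (Subgroup.zpowers y : Set G) :=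
          Subgroup.zpowers_le.mpr (Subgroup.mem_zpowers_iff.mpr
            ⟨(m : ℤ), by simpa using hm.symm⟩)
        have hcard : Set.ncard (Subgroup.zpowers y : Set G)
            ≤ Set.ncard (Subgroup.zpowers x₀ : Set G) := by
          rw [← Nat.card_coe_set_eq, ← Nat.card_coe_set_eq,
            SetLike.coe_sort_coe, SetLike.coe_sort_coe, Nat.card_zpowers,
            Nat.card_zpowers, heq]
        have heqset := Set.eq_of_subset_of_ncard_le hsub hcard (Set.toFinite _)
        have hy : y ∈ (Subgroup.zpowers y : Set G) := Subgroup.mem_zpowers y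
        rw [← heqset] at hy
        exact hy
    have hcyc : IsCyclic G := ⟨x₀, hgen⟩
    refine ⟨hcyc, ?_⟩
    rcases eq_or_ne (Fintype.card G) 1 with h1 | h1
    · exact ⟨2, 0, Nat.prime_two, by simpa using h1⟩
    · set N := Fintype.card G with hN
      have hN0 : N ≠ 0 := Fintype.card_ne_zero
      have hpmf : N.minFac.Prime := Nat.minFac_prime h1
      have huniq : ∀ {q : ℕ}, q.Prime → q ∣ N → q = N.minFac := by
        intro q hq hqd
        by_contra hne
        haveI : Fact q.Prime := ⟨hq⟩
        haveI : Fact N.minFac.Prime := ⟨hpmf⟩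
        obtain ⟨a, ha⟩ := exists_prime_orderOf_dvd_card q hqd
        obtain ⟨b, hb⟩ := exists_prime_orderOf_dvd_card N.minFac (Nat.minFac_dvd N)
        have hab : a ≠ b := fun h => hne (by rw [← ha, h, hb])
        obtain ⟨-, h | h⟩ := hadj a b hab
        · obtain ⟨m, -, rfl⟩ := h
          have hd : orderOf (a ^ m) ∣ orderOf a := orderOf_pow_dvd m
          rw [hb, ha] at hd
          exact hne ((Nat.prime_dvd_prime_iff_eq hpmf hq).mp hd).symm
        · obtain ⟨m, -, rfl⟩ := h
          have hd : orderOf (b ^ m) ∣ orderOf b := orderOf_pow_dvd m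
          rw [ha, hb] at hd
          exact hne ((Nat.prime_dvd_prime_iff_eq hq hpmf).mp hd)
      exact ⟨N.minFac, N.primeFactorsList.length, hpmf,
        Nat.eq_prime_pow_of_unique_prime_dvd hN0 huniq⟩
  · rintro ⟨hc, p, n, hp, hcard⟩
    refine ⟨G, ‹_›, {g : G | g ≠ 1}, by simp, fun c hc' => by simpa using hc', ⟨?_⟩⟩
    refine ⟨Equiv.refl G, ?_⟩
    intro x y
    simp only [Equiv.refl_apply]
    constructor
    · intro h
      exact aux_powerGraph_complete hc hp hcard h.ne
    · intro h
      refine ⟨h.ne, Or.inl ?_⟩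
      simp only [Set.mem_setOf_eq]
      intro he
      exact h.ne (by simpa [inv_mul_eq_one] using he)
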